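/- Let R be a comultiplication commutative ring with identity. Then the graphs PIS(R) and SII(R) are isomorphic; concretely, the map sending a nonzero proper ideal I to Ann_R(I) is a graph isomorphism from PIS(R) to SII(R). -/

import Mathlib

open Pointwise

/-- An ideal `I` of a commutative ring `R` is a *second ideal* if `I ≠ (0)` and
for every `r : R`, either `r • I = (0)` or `r • I = I`. -/
def IsSecondIdeal {R : Type*} [CommRing R] (I : Ideal R) : Prop :=
  I ≠ ⊥ ∧ ∀ r : R, r • I = ⊥ ∨ r • I = I

/-- The *second ideal intersection graph* `SII R`: vertices are the nonzero proper
ideals of `R`, and two distinct vertices `I`, `J` are adjacent iff `I ⊓ J` is a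
second ideal of `R`. -/
def SII (R : Type*) [CommRing R] : SimpleGraph {I : Ideal R // I ≠ ⊥ ∧ I ≠ ⊤} where
  Adj I J := I ≠ J ∧ IsSecondIdeal (I.1 ⊓ J.1)
  symm := ⟨fun I J h => ⟨h.1.symm, by rw [inf_comm]; exact h.2⟩⟩
  loopless := ⟨fun I h => h.1 rfl⟩
/-- The *prime ideal sum graph* `PIS R`: vertices are the nonzero proper ideals of
`R`, and two distinct vertices `I`, `J` are adjacent iff `I + J` is a prime ideal. -/
def PIS (R : Type*) [CommRing R] : SimpleGraph {I : Ideal R // I ≠ ⊥ ∧ I ≠ ⊤} where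
  Adj I J := I ≠ J ∧ (I.1 ⊔ J.1).IsPrime
  symm := ⟨fun I J h => ⟨h.1.symm, by rw [sup_comm]; exact h.2⟩⟩
  loopless := ⟨fun I h => h.1 rfl⟩
/-- `R` is a *comultiplication ring* if every ideal `I` of `R` satisfies
`I = Ann_R (Ann_R I)`. -/
def IsComultiplicationRing (R : Type*) [CommRing R] : Prop :=
  ∀ I : Ideal R, Submodule.annihilator (Submodule.annihilator I : Ideal R) = I

section aux
variable {R : Type*} [CommRing R]

lemma annR_top : (⊤ : Ideal R).annihilator = ⊥ := by
  ext r
  simp only [Submodule.mem_annihilator, Submodule.mem_bot]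
  constructor
  · intro h; simpa using h 1 trivial
  · rintro rfl x _; simp

lemma mem_psmul {r x : R} {I : Ideal R} : x ∈ r • I ↔ ∃ y ∈ I, r * y = x := by
  rw [← SetLike.mem_coe, Submodule.coe_pointwise_smul, Set.mem_smul_set]
  simp [smul_eq_mul]

lemma annR_sup (I J : Ideal R) :
    (I ⊔ J).annihilator = I.annihilator ⊓ J.annihilator := by
  refine le_antisymm (le_inf (Submodule.annihilator_mono le_sup_left)
    (Submodule.annihilator_mono le_sup_right)) ?_
  intro r hr
  rw [Submodule.mem_inf] at hr
  rw [Submodule.mem_annihilator]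
  intro n hn
  obtain ⟨x, hx, y, hy, rfl⟩ := Submodule.mem_sup.1 hn
  rw [smul_add, Submodule.mem_annihilator.1 hr.1 x hx,
    Submodule.mem_annihilator.1 hr.2 y hy, add_zero]

lemma second_ann_iff_prime (hco : ∀ I : Ideal R,
      Submodule.annihilator (Submodule.annihilator I : Ideal R) = I)
    (P : Ideal R) : IsSecondIdeal P.annihilator ↔ P.IsPrime := by
  constructor
  · rintro ⟨hne, hsmul⟩
    have hPtop : P ≠ ⊤ := by
      rintro rfl; exact hne annR_top
    refine ⟨hPtop, ?_⟩
    intro r s hrs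
    by_cases hr : r ∈ P
    · exact Or.inl hr
    right
    have hrne : r • P.annihilator ≠ ⊥ := by
      intro hb
      apply hr
      rw [← hco P]
      rw [Submodule.mem_annihilator]
      intro x hx
      have : r * x ∈ (⊥ : Ideal R) := hb ▸ mem_psmul.2 ⟨x, hx, rfl⟩
      simpa [smul_eq_mul, mul_comm] using this
    have heq : r • P.annihilator = P.annihilator := (hsmul r).resolve_left hrne
    rw [← hco P, Submodule.mem_annihilator]
    intro x hx
    obtain ⟨y, hy, rfl⟩ := mem_psmul.1 (heq ▸ hx)
    have : y * (r * s) = 0 := Submodule.mem_annihilator.1 hy _ hrs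
    rw [smul_eq_mul]; ring_nf; ring_nf at this; linear_combination this
  · intro hP
    constructor
    · intro hb
      have : P = ⊤ := by rw [← hco P, hb, Submodule.annihilator_bot]
      exact hP.ne_top this
    intro r
    by_cases hr : r ∈ P
    · left
      rw [eq_bot_iff]
      intro x hx
      obtain ⟨y, hy, rfl⟩ := mem_psmul.1 hx
      have : y * r = 0 := Submodule.mem_annihilator.1 hy r hr
      simp only [Submodule.mem_bot]
      linear_combination this
    · right
      have key : (r • P.annihilator).annihilator = P.annihilator.annihilator := by
        rw [hco P]
        ext s
        rw [Submodule.mem_annihilator]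
        constructor
        · intro h
          have hsr : s * r ∈ P := by
            rw [← hco P, Submodule.mem_annihilator]
            intro y hy
            have := h (r * y) (mem_psmul.2 ⟨y, hy, rfl⟩)
            rw [smul_eq_mul] at this
            rw [smul_eq_mul]; linear_combination this
          exact (hP.mem_or_mem hsr).resolve_right hr
        · intro hs x hx
          obtain ⟨y, hy, rfl⟩ := mem_psmul.1 hx
          have : y * (s * r) = 0 := Submodule.mem_annihilator.1 hy _ (P.mul_mem_right r hs)
          rw [smul_eq_mul]; linear_combination this
      have := congrArg Submodule.annihilator key
      rwa [hco, hco] at this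
end aux

/-- Let `R` be a comultiplication ring. Then `PIS R` and `SII R`
are isomorphic graphs; concretely, the map sending a nonzero proper ideal `I` to
`Ann_R I` is a graph isomorphism from `PIS R` to `SII R`. -/
theorem stmt19 (R : Type*) [CommRing R] (hco : IsComultiplicationRing R) :
    ∃ φ : (PIS R) ≃g (SII R),
      ∀ I : {I : Ideal R // I ≠ ⊥ ∧ I ≠ ⊤},
        (φ I).1 = (Submodule.annihilator I.1 : Ideal R) := by
  
  classical
  have ann_ne_bot : ∀ I : {I : Ideal R // I ≠ ⊥ ∧ I ≠ ⊤},
      Submodule.annihilator I.1 ≠ (⊥ : Ideal R) := by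
    intro I hb
    exact I.2.2 (by rw [← hco I.1, hb, Submodule.annihilator_bot])
  have ann_ne_top : ∀ I : {I : Ideal R // I ≠ ⊥ ∧ I ≠ ⊤},
      Submodule.annihilator I.1 ≠ (⊤ : Ideal R) := by
    intro I ht
    exact I.2.1 (Submodule.annihilator_eq_top_iff.1 ht)
  let e : {I : Ideal R // I ≠ ⊥ ∧ I ≠ ⊤} → {I : Ideal R // I ≠ ⊥ ∧ I ≠ ⊤} :=
    fun I => ⟨Submodule.annihilator I.1, ann_ne_bot I, ann_ne_top I⟩
  have hinv : Function.Involutive e := by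
    intro I
    exact Subtype.ext (hco I.1)
  have hinj : Function.Injective e := hinv.injective
  refine ⟨⟨hinv.toPerm, ?_⟩, fun I => rfl⟩
  intro I J
  show (SII R).Adj (e I) (e J) ↔ (PIS R).Adj I J
  constructor
  · rintro ⟨hne, hsec⟩
    refine ⟨fun h => hne (by rw [h]), ?_⟩
    rw [← second_ann_iff_prime hco]
    rwa [show (e I).1 ⊓ (e J).1 = (I.1 ⊔ J.1).annihilator from (annR_sup I.1 J.1).symm] at hsec
  · rintro ⟨hne, hpr⟩
    refine ⟨fun h => hne (hinj h), ?_⟩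
    rw [show (e I).1 ⊓ (e J).1 = (I.1 ⊔ J.1).annihilator from (annR_sup I.1 J.1).symm]
    exact (second_ann_iff_prime hco _).2 hpr
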